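/- Under commutativity, associativity, condition (A), and the additional assumption that the nonzero entries of the column a_{1,1} are pairwise distinct, for every nonzero value v occurring among the entries: if a i j k = v and a j m p = v, then the columns a_{k,m} and a_{i,p} are equal (i.e., a k m q = a i p q for all q). -/

import Mathlib

/-
Condition (A) says that the `n` columns of each `A_i`, and likewise of each `B_m`, are `n`
distinct vectors of an `n`-element set, so they enumerate the same set: `a_{k,m} = a_{i,e k}`
for a permutation `e`. Feeding this into associativity,
`∑_k a_{ijk} a_{k,m} = ∑_q a_{jmq} a_{i,q}`, and comparing coefficients in the basis of
columns of `A_i` gives `a_{ijk} = a_{jm(e k)}`. In particular every column is a permutation of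
every other one, so each column inherits from `a_{1,1}` the distinctness of its nonzero entries.
Now `a_{jm(e k)} = a_{ijk} = v = a_{jmp}` with `v ≠ 0` forces `e k = p`, i.e.
`a_{k,m} = a_{i,p}`.
-/

open Matrix BigOperators

/-- The coefficients are associative:
`∑_k (a i j k) (a k m p) = ∑_q (a j m q) (a i q p)`. -/
def IsAssocCoeff (n : ℕ) (a : Fin n → Fin n → Fin n → ℝ) : Prop :=
  ∀ i j m p, ∑ k, a i j k * a k m p = ∑ q, a j m q * a i q p

/-- The coefficients are commutative: `a i j k = a j i k`. -/
def IsCommCoeff (n : ℕ) (a : Fin n → Fin n → Fin n → ℝ) : Prop :=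
  ∀ i j k, a i j k = a j i k

/-- Condition (A): the set of columns `{a_{i,j}}` has exactly `n` distinct elements, and for
every `i` the columns of `A_i` (the `j ↦ a_{i,j}`) and of `B_i` (the `j ↦ a_{j,i}`) are
linearly independent. -/
def CondA (n : ℕ) (a : Fin n → Fin n → Fin n → ℝ) : Prop :=
  ({c : Fin n → ℝ | ∃ i j, c = fun k => a i j k}.ncard = n) ∧
  (∀ i, LinearIndependent ℝ (fun j => fun k => a i j k)) ∧
  (∀ i, LinearIndependent ℝ (fun j => fun k => a j i k))

section

variable {n : ℕ} {a : Fin n → Fin n → Fin n → ℝ}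

theorem CondA.range_eq_setOf_cols (hA : CondA n a) (i : Fin n) :
    Set.range (a i) = {c : Fin n → ℝ | ∃ i j, c = fun k => a i j k} := by
  have hfin : {c : Fin n → ℝ | ∃ i j, c = fun k => a i j k}.Finite :=
    (Set.finite_range fun p : Fin n × Fin n => a p.1 p.2).subset
      (by rintro _ ⟨i, j, rfl⟩; exact ⟨(i, j), rfl⟩)
  refine Set.eq_of_subset_of_ncard_le (by rintro _ ⟨j, rfl⟩; exact ⟨i, j, rfl⟩) ?_ hfin
  rw [hA.1, Set.ncard_range_of_injective (hA.2.1 i).injective, Nat.card_eq_fintype_card,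
    Fintype.card_fin]

theorem CondA.exists_perm_col_eq (hA : CondA n a) (i m : Fin n) :
    ∃ e : Equiv.Perm (Fin n), ∀ k, a i (e k) = a k m := by
  have hmem (k : Fin n) : a k m ∈ Set.range (a i) := by
    rw [hA.range_eq_setOf_cols]
    exact ⟨k, m, rfl⟩
  choose e he using hmem
  have he_inj : Function.Injective e := fun k k' h =>
    (hA.2.2 m).injective (by rw [← he k, ← he k', h])
  exact ⟨Equiv.ofBijective e (Finite.injective_iff_bijective.mp he_inj), he⟩

theorem IsAssocCoeff.entry_eq_of_col_eq (hassoc : IsAssocCoeff n a) {i m : Fin n}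
    (hAi : LinearIndependent ℝ (a i)) (e : Equiv.Perm (Fin n))
    (he : ∀ k, a i (e k) = a k m) (j k : Fin n) :
    a i j k = a j m (e k) := by
  have hsum : ∑ t, a i j (e.symm t) • a i t = ∑ q, a j m q • a i q := by
    rw [← Equiv.sum_comp e]
    funext p
    simpa [he] using hassoc i j m p
  simpa using Fintype.linearIndependent_iffₛ.mp hAi _ _ hsum (e k)

theorem exists_perm_entry_eq (hassoc : IsAssocCoeff n a) (hA : CondA n a) (i m : Fin n) :
    ∃ e : Equiv.Perm (Fin n), (∀ k, a i (e k) = a k m) ∧ ∀ j k, a i j k = a j m (e k) := by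
  obtain ⟨e, he⟩ := hA.exists_perm_col_eq i m
  exact ⟨e, he, hassoc.entry_eq_of_col_eq (hA.2.1 i) e he⟩

theorem exists_perm_col_comp_eq (hassoc : IsAssocCoeff n a) (hA : CondA n a)
    (i i' j m : Fin n) : ∃ σ : Equiv.Perm (Fin n), a i i' = a j m ∘ σ := by
  obtain ⟨f, -, hf⟩ := exists_perm_entry_eq hassoc hA i j
  obtain ⟨g, -, hg⟩ := exists_perm_entry_eq hassoc hA i' m
  exact ⟨f.trans g, funext fun r => (hf i' r).trans (hg j (f r))⟩

end

theorem Set.injOn_ne_zero_of_comp_perm {α β : Type*} [Zero β] {x y : α → β}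
    (σ : Equiv.Perm α) (hxy : x = y ∘ σ) (hx : Set.InjOn x {r | x r ≠ 0}) :
    Set.InjOn y {r | y r ≠ 0} := by
  subst hxy
  intro s hs t ht hst
  simpa using congrArg σ (hx (x₁ := σ.symm s) (x₂ := σ.symm t) (by simpa using hs)
    (by simpa using ht) (by simpa using hst))

theorem stmt_6_general (n : ℕ) (hn : 1 ≤ n) (a : Fin n → Fin n → Fin n → ℝ)
    (hassoc : IsAssocCoeff n a) (hA : CondA n a)
    (hdist : ∀ k k' : Fin n, a ⟨0, hn⟩ ⟨0, hn⟩ k ≠ 0 → a ⟨0, hn⟩ ⟨0, hn⟩ k' ≠ 0 →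
      a ⟨0, hn⟩ ⟨0, hn⟩ k = a ⟨0, hn⟩ ⟨0, hn⟩ k' → k = k') :
    ∀ v : ℝ, v ≠ 0 → (∃ i' j' k', a i' j' k' = v) →
      ∀ i j k m p, a i j k = v → a j m p = v → ∀ q, a k m q = a i p q := by
  intro v hv _ i j k m p hijk hjmp q
  obtain ⟨e, hcol, hentry⟩ := exists_perm_entry_eq hassoc hA i m
  obtain ⟨σ, hσ⟩ := exists_perm_col_comp_eq hassoc hA ⟨0, hn⟩ ⟨0, hn⟩ j m
  have hinj : Set.InjOn (a j m) {r | a j m r ≠ 0} :=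
    Set.injOn_ne_zero_of_comp_perm σ hσ fun s hs t ht => hdist s t hs ht
  have hek : e k = p :=
    hinj (by simp [← hentry, hijk, hv]) (by simp [hjmp, hv]) (by rw [← hentry, hijk, hjmp])
  rw [← hcol, hek]

/-- Under commutativity, associativity, condition (A), and pairwise-distinct
nonzero entries of `a_{1,1}`: for every nonzero entry value `v`, if `a i j k = v` and
`a j m p = v`, then the columns `a_{k,m}` and `a_{i,p}` coincide. -/
theorem stmt_6 (n : ℕ) (hn : 1 ≤ n) (a : Fin n → Fin n → Fin n → ℝ)
    (hnonneg : ∀ i j k, 0 ≤ a i j k) (hsum : ∀ i j, ∑ k, a i j k = 1)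
    (hcomm : IsCommCoeff n a) (hassoc : IsAssocCoeff n a) (hA : CondA n a)
    (hdist : ∀ k k' : Fin n, a ⟨0, hn⟩ ⟨0, hn⟩ k ≠ 0 → a ⟨0, hn⟩ ⟨0, hn⟩ k' ≠ 0 →
      a ⟨0, hn⟩ ⟨0, hn⟩ k = a ⟨0, hn⟩ ⟨0, hn⟩ k' → k = k') :
    ∀ v : ℝ, v ≠ 0 → (∃ i' j' k', a i' j' k' = v) →
      ∀ i j k m p, a i j k = v → a j m p = v → ∀ q, a k m q = a i p q :=
  stmt_6_general n hn a hassoc hA hdist
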